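/- arXiv:1005.3187 — 5 statements merged into one kernel-verified Lean document; each statement's English description precedes it below -/
import Mathlib

section
/- Let α ∈ (0,1) and m > 2/α be real numbers. Let τ : [0,∞) → [0,∞) be a nondecreasing right-continuous function with τ(0) = 0, and let X : [0,∞) → ℝ be a right-continuous, locally integrable function. Set Ŷ(ℓ) = ∫_0^{τ(ℓ)} X(u) du, and for s > 0 let Δτ(s) = τ(s) − τ(s−) and ΔŶ(s) = Ŷ(s) − Ŷ(s−) denote the jumps (left limits exist by monotonicity of τ and continuity of the integral). For ε > 0 and b ∈ ℝ let N(ε,b) be the number of s ∈ (0,ε] with b·Δτ(s) > ε^m, and let J(ε) be the number of s ∈ (0,ε] with ΔŶ(s) > ε^m. If for every b > 0 one has lim_{n→∞} n^{1−αm} N(1/n, b) = b^α, then lim_{n→∞} n^{1−αm} J(1/n) = (max(X(0),0))^α, with the convention 0^α = 0. -/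
open MeasureTheory Set Filter Function Topology

/-!
For `b₁ < X 0 < b₂`, right continuity at `0` gives `T > 0` with `X ∈ [b₁, b₂]` on `[0, T]` and
`τ ≤ T` near `0`, so for small `s` the jump of `Ŷ` at `s` is
`∫_{τ(s-)}^{τ(s)} X ∈ [b₁ Δτ(s), b₂ Δτ(s)]`. Comparing the sets of large jumps gives, for large
`n`, `N(1/n, b₁) ≤ J(1/n) ≤ N(1/n, b₂)` whenever `0 < b₁`; the sets involved are finite because
the normalised counts of `τ` converge to `b ^ α > 0`. Letting `b₁ ↑ X 0`, `b₂ ↓ max (X 0) 0` and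
using continuity of `b ↦ b ^ α` gives the limit.
-/

section Squeeze

variable {ι β γ : Type*} [LinearOrder γ] [TopologicalSpace γ] [OrderTopology γ]
  {l : Filter ι} {lb : Filter β} {u : ι → γ} {v : β → ι → γ} {φ : β → γ} {L a : γ}

theorem eventually_lt_of_frequently_le (hφ : Tendsto φ lb (𝓝 L))
    (hv : ∃ᶠ b in lb, Tendsto (v b) l (𝓝 (φ b)) ∧ ∀ᶠ i in l, u i ≤ v b i) (ha : L < a) :
    ∀ᶠ i in l, u i < a := by
  obtain ⟨b, hφb, hvb, hub⟩ := ((hφ.eventually (eventually_lt_nhds ha)).and_frequently hv).exists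
  filter_upwards [hvb.eventually (eventually_lt_nhds hφb), hub] with i hvi hui
  exact hui.trans_lt hvi

theorem eventually_gt_of_frequently_ge (hφ : Tendsto φ lb (𝓝 L))
    (hv : ∃ᶠ b in lb, Tendsto (v b) l (𝓝 (φ b)) ∧ ∀ᶠ i in l, v b i ≤ u i) (ha : a < L) :
    ∀ᶠ i in l, a < u i :=
  eventually_lt_of_frequently_le (γ := γᵒᵈ) hφ hv ha

end Squeeze

theorem tendsto_max_rpow_of_forall_eventually_le {ι : Type*} {l : Filter ι} {u : ι → ℝ}
    {v : ℝ → ι → ℝ} {α c : ℝ} (hα : 0 < α) (hu : ∀ i, 0 ≤ u i)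
    (hv : ∀ b > 0, Tendsto (v b) l (𝓝 (b ^ α)))
    (hup : ∀ b > max c 0, ∀ᶠ i in l, u i ≤ v b i)
    (hlow : ∀ b ∈ Ioo 0 c, ∀ᶠ i in l, v b i ≤ u i) :
    Tendsto u l (𝓝 (max c 0 ^ α)) := by
  have hcont : ∀ x : ℝ, Tendsto (· ^ α) (𝓝 x) (𝓝 (x ^ α)) := fun x =>
    Real.continuousAt_rpow_const x α (Or.inr hα.le)
  refine tendsto_order.2 ⟨fun a ha => ?_, fun a ha => ?_⟩
  · rcases le_or_gt c 0 with hc | hc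
    · rw [max_eq_right hc, Real.zero_rpow hα.ne'] at ha
      exact Eventually.of_forall fun i => ha.trans_le (hu i)
    rw [max_eq_left hc.le] at ha
    refine eventually_gt_of_frequently_ge (v := v)
      ((hcont c).mono_left (nhdsWithin_le_nhds (s := Iio c))) (Eventually.frequently ?_) ha
    filter_upwards [Ioo_mem_nhdsLT hc] with b hb using ⟨hv b hb.1, hlow b hb⟩
  · refine eventually_lt_of_frequently_le (v := v)
      ((hcont _).mono_left (nhdsWithin_le_nhds (s := Ioi (max c 0)))) (Eventually.frequently ?_) ha
    filter_upwards [self_mem_nhdsWithin] with b (hb : max c 0 < b)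
    exact ⟨hv b ((le_max_right c 0).trans_lt hb), hup b hb⟩

section LeftLim

variable {α β : Type*} [LinearOrder α] [TopologicalSpace α] [OrderTopology α] [DenselyOrdered α]
  [ConditionallyCompleteLinearOrder β] [TopologicalSpace β] [OrderTopology β]
  {f : α → β} {a b : α}

theorem MonotoneOn.tendsto_leftLim_within (hf : MonotoneOn f (Icc a b)) (hab : a < b) :
    Tendsto f (𝓝[<] b) (𝓝[Icc (f a) (f b)] leftLim f b) := by
  have := nhdsLT_neBot_of_exists_lt ⟨a, hab⟩
  have hmem : ∀ x ∈ Ioo a b, x ∈ Icc a b := fun x hx => ⟨hx.1.le, hx.2.le⟩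
  have hlim := MonotoneOn.tendsto_nhdsWithin_Ioo_left (nonempty_Ioo.2 hab)
    (hf.mono Ioo_subset_Icc_self)
    ⟨f b, forall_mem_image.2 fun x hx => hf (hmem x hx) (right_mem_Icc.2 hab.le) hx.2.le⟩
  refine tendsto_nhdsWithin_iff.2 ⟨by rwa [leftLim_eq_of_tendsto hlim], ?_⟩
  filter_upwards [Ioo_mem_nhdsLT hab] with x hx
  exact ⟨hf (left_mem_Icc.2 hab.le) (hmem x hx) hx.1.le,
    hf (hmem x hx) (right_mem_Icc.2 hab.le) hx.2.le⟩

theorem MonotoneOn.leftLim_mem_Icc (hf : MonotoneOn f (Icc a b)) (hab : a < b) :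
    leftLim f b ∈ Icc (f a) (f b) :=
  have := nhdsLT_neBot_of_exists_lt ⟨a, hab⟩
  isClosed_Icc.mem_of_tendsto (tendsto_nhdsWithin_iff.1 (hf.tendsto_leftLim_within hab)).1
    (tendsto_nhdsWithin_iff.1 (hf.tendsto_leftLim_within hab)).2

end LeftLim

theorem sep_gt_subset_sep_gt {α : Type*} {I : Set α} {f g : α → ℝ} {x : ℝ}
    (hfg : ∀ s ∈ I, f s ≤ g s) : {s ∈ I | f s > x} ⊆ {s ∈ I | g s > x} :=
  fun s hs => ⟨hs.1, hs.2.trans_le (hfg s hs.1)⟩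

theorem intervalIntegral_mem_Icc_of_forall_mem_Icc {f : ℝ → ℝ} {a b m M : ℝ} (hab : a ≤ b)
    (hf : IntegrableOn f (Icc a b)) (h : ∀ x ∈ Icc a b, f x ∈ Icc m M) :
    ∫ x in a..b, f x ∈ Icc (m * (b - a)) (M * (b - a)) := by
  have hfi : IntervalIntegrable f volume a b := (uIcc_of_le hab ▸ hf).intervalIntegrable
  constructor
  · simpa [mul_comm] using intervalIntegral.integral_mono_on hab intervalIntegrable_const hfi
      fun x hx => (h x hx).1
  · simpa [mul_comm] using intervalIntegral.integral_mono_on hab hfi intervalIntegrable_const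
      fun x hx => (h x hx).2

theorem sub_leftLim_intervalIntegral_comp {τ X : ℝ → ℝ} {a s c : ℝ}
    (hτ : MonotoneOn τ (Icc a s)) (has : a < s) (hca : c ≤ τ a)
    (hX : IntegrableOn X (Icc c (τ s))) :
    (∫ u in c..τ s, X u) - leftLim (fun ℓ => ∫ u in c..τ ℓ, X u) s =
      ∫ u in leftLim τ s..τ s, X u := by
  have := nhdsLT_neBot_of_exists_lt ⟨a, has⟩
  obtain ⟨hL₁, hL₂⟩ := hτ.leftLim_mem_Icc has
  have hcL : c ≤ leftLim τ s := hca.trans hL₁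
  have hcs : c ≤ τ s := hcL.trans hL₂
  have hF : ContinuousOn (fun t => ∫ u in c..t, X u) (Icc c (τ s)) := by
    rw [← uIcc_of_le hcs]
    exact intervalIntegral.continuousOn_primitive_interval (uIcc_of_le hcs ▸ hX)
  have hleft : leftLim (fun ℓ => ∫ u in c..τ ℓ, X u) s = ∫ u in c..leftLim τ s, X u :=
    leftLim_eq_of_tendsto <| (hF _ ⟨hcL, hL₂⟩).tendsto.comp <|
      (hτ.tendsto_leftLim_within has).mono_right (nhdsWithin_mono _ (Icc_subset_Icc_left hca))
  rw [hleft, intervalIntegral.integral_interval_sub_left]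
  · exact (hX.mono_set (uIcc_of_le hcs).subset).intervalIntegrable
  · exact (hX.mono_set (uIcc_of_le hcL ▸ Icc_subset_Icc_right hL₂)).intervalIntegrable

theorem eventually_forall_jump_intervalIntegral_comp_mem_Icc {τ X : ℝ → ℝ} {b₁ b₂ : ℝ}
    (hτ : MonotoneOn τ (Ici 0)) (hτ_rc : ContinuousWithinAt τ (Ici 0) 0) (hτ0 : τ 0 = 0)
    (hX_rc : ContinuousWithinAt X (Ici 0) 0) (hX : LocallyIntegrableOn X (Ici 0))
    (h₁ : b₁ < X 0) (h₂ : X 0 < b₂) :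
    ∀ᶠ ε in 𝓝[>] 0, ∀ s ∈ Ioc 0 ε,
      (∫ u in (0 : ℝ)..τ s, X u) - leftLim (fun ℓ => ∫ u in (0 : ℝ)..τ ℓ, X u) s ∈
        Icc (b₁ * (τ s - leftLim τ s)) (b₂ * (τ s - leftLim τ s)) := by
  obtain ⟨T, hT, hXT⟩ := mem_nhdsGE_iff_exists_Icc_subset.1 (hX_rc (Icc_mem_nhds h₁ h₂))
  have hτT : ∀ᶠ ε in 𝓝[>] 0, τ ε ≤ T :=
    nhdsWithin_mono _ Ioi_subset_Ici_self (hτ_rc (Iic_mem_nhds (hτ0.trans_lt hT)))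
  filter_upwards [hτT] with ε hε s ⟨hs, hsε⟩
  have hτs : MonotoneOn τ (Icc 0 s) := hτ.mono Icc_subset_Ici_self
  have hsT : Icc 0 (τ s) ⊆ Icc 0 T :=
    Icc_subset_Icc_right ((hτ hs.le (hs.le.trans hsε) hsε).trans hε)
  obtain ⟨hL₀, hL⟩ := hτs.leftLim_mem_Icc hs
  have hXs : IntegrableOn X (Icc 0 (τ s)) :=
    hX.integrableOn_compact_subset (hsT.trans Icc_subset_Ici_self) isCompact_Icc
  rw [sub_leftLim_intervalIntegral_comp hτs hs hτ0.ge hXs]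
  exact intervalIntegral_mem_Icc_of_forall_mem_Icc hL (hXs.mono_set (Icc_subset_Icc_left
    (hτ0 ▸ hL₀))) fun u hu => hXT (hsT ⟨(hτ0 ▸ hL₀).trans hu.1, hu.2⟩)

theorem stmt0_general (α m : ℝ) (hα : α ∈ Set.Ioo (0 : ℝ) 1)
    (τ : ℝ → ℝ) (hτ_mono : MonotoneOn τ (Set.Ici 0))
    (hτ_rc : ∀ s ≥ (0 : ℝ), ContinuousWithinAt τ (Set.Ici s) s)
    (hτ0 : τ 0 = 0)
    (X : ℝ → ℝ) (hX_rc : ∀ s ≥ (0 : ℝ), ContinuousWithinAt X (Set.Ici s) s)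
    (hX_int : LocallyIntegrableOn X (Set.Ici 0))
    (Y : ℝ → ℝ) (hY : ∀ ℓ, Y ℓ = ∫ u in (0 : ℝ)..(τ ℓ), X u)
    (N : ℝ → ℝ → ℕ)
    (hN : ∀ ε > (0 : ℝ), ∀ b : ℝ,
      N ε b = {s ∈ Set.Ioc (0 : ℝ) ε | b * (τ s - leftLim τ s) > ε ^ m}.ncard)
    (J : ℝ → ℕ)
    (hJ : ∀ ε > (0 : ℝ),
      J ε = {s ∈ Set.Ioc (0 : ℝ) ε | Y s - leftLim Y s > ε ^ m}.ncard)
    (hLLN : ∀ b > (0 : ℝ),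
      Tendsto (fun n : ℕ => (n : ℝ) ^ (1 - α * m) * (N (1 / n) b : ℝ))
        atTop (nhds (b ^ α))) :
    Tendsto (fun n : ℕ => (n : ℝ) ^ (1 - α * m) * (J (1 / n) : ℝ))
      atTop (nhds (max (X 0) 0 ^ α)) := by
  obtain rfl : Y = fun ℓ => ∫ u in (0 : ℝ)..τ ℓ, X u := funext hY
  have hε : Tendsto (fun n : ℕ => 1 / (n : ℝ)) atTop (𝓝[>] 0) :=
    tendsto_nhdsWithin_iff.2 ⟨tendsto_one_div_atTop_nhds_zero_nat,
      eventually_gt_atTop 0 |>.mono fun n hn => by simp [hn]⟩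
  have hpos : ∀ᶠ n : ℕ in atTop, (0 : ℝ) < 1 / n := hε.eventually self_mem_nhdsWithin
  have hjump (b₁ b₂ : ℝ) (h₁ : b₁ < X 0) (h₂ : X 0 < b₂) := hε.eventually
    (eventually_forall_jump_intervalIntegral_comp_mem_Icc hτ_mono (hτ_rc 0 le_rfl) hτ0
      (hX_rc 0 le_rfl) hX_int h₁ h₂)
  have hNfin (b : ℝ) (hb : 0 < b) : ∀ᶠ n : ℕ in atTop,
      {s ∈ Ioc (0 : ℝ) (1 / n) | b * (τ s - leftLim τ s) > (1 / n : ℝ) ^ m}.Finite := by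
    filter_upwards [(hLLN b hb).eventually (eventually_gt_nhds (Real.rpow_pos_of_pos hb α)),
      hpos] with n hn hn₀
    refine finite_of_ncard_pos ?_
    rw [← hN _ hn₀]
    exact_mod_cast pos_of_mul_pos_right hn (by positivity)
  have hup (b : ℝ) (hb : max (X 0) 0 < b) : ∀ᶠ n : ℕ in atTop, J (1 / n) ≤ N (1 / n) b := by
    filter_upwards [hjump (X 0 - 1) b (sub_one_lt _) ((le_max_left _ _).trans_lt hb),
      hNfin b ((le_max_right _ _).trans_lt hb), hpos] with n hn hfin hn₀
    rw [hJ _ hn₀, hN _ hn₀]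
    exact ncard_le_ncard (sep_gt_subset_sep_gt fun s hs => (hn s hs).2) hfin
  have hlow (b : ℝ) (hb : b ∈ Ioo 0 (X 0)) : ∀ᶠ n : ℕ in atTop, N (1 / n) b ≤ J (1 / n) := by
    filter_upwards [hjump b (X 0 + 1) hb.2 (lt_add_one _),
      hNfin (X 0 + 1) (by linarith [hb.1, hb.2]), hpos] with n hn hfin hn₀
    rw [hJ _ hn₀, hN _ hn₀]
    exact ncard_le_ncard (sep_gt_subset_sep_gt fun s hs => (hn s hs).1)
      (hfin.subset (sep_gt_subset_sep_gt fun s hs => (hn s hs).2))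
  exact tendsto_max_rpow_of_forall_eventually_le hα.1 (fun n => by positivity) hLLN
    (fun b hb => (hup b hb).mono fun n hn => by gcongr)
    (fun b hb => (hlow b hb).mono fun n hn => by gcongr)

/-- **Deterministic core of Theorem 1**: counting large jumps of the time-changed
integral `Ŷ ℓ = ∫_0^{τ ℓ} X` at scale `ε ^ m` on `(0, ε]` recovers `(X 0)⁺ ^ α`,
under the law-of-large-numbers hypothesis for the jump counts of `τ`. -/
theorem stmt0 (α m : ℝ) (hα : α ∈ Set.Ioo (0 : ℝ) 1) (hm : m > 2 / α)
    (τ : ℝ → ℝ) (hτ_mono : MonotoneOn τ (Set.Ici 0))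
    (hτ_rc : ∀ s ≥ (0 : ℝ), ContinuousWithinAt τ (Set.Ici s) s)
    (hτ0 : τ 0 = 0) (hτ_nonneg : ∀ s ≥ (0 : ℝ), 0 ≤ τ s)
    (X : ℝ → ℝ) (hX_rc : ∀ s ≥ (0 : ℝ), ContinuousWithinAt X (Set.Ici s) s)
    (hX_int : LocallyIntegrableOn X (Set.Ici 0))
    (Y : ℝ → ℝ) (hY : ∀ ℓ, Y ℓ = ∫ u in (0 : ℝ)..(τ ℓ), X u)
    (N : ℝ → ℝ → ℕ)
    (hN : ∀ ε > (0 : ℝ), ∀ b : ℝ,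
      N ε b = {s ∈ Set.Ioc (0 : ℝ) ε | b * (τ s - leftLim τ s) > ε ^ m}.ncard)
    (J : ℝ → ℕ)
    (hJ : ∀ ε > (0 : ℝ),
      J ε = {s ∈ Set.Ioc (0 : ℝ) ε | Y s - leftLim Y s > ε ^ m}.ncard)
    (hLLN : ∀ b > (0 : ℝ),
      Tendsto (fun n : ℕ => (n : ℝ) ^ (1 - α * m) * (N (1 / n) b : ℝ))
        atTop (nhds (b ^ α))) :
    Tendsto (fun n : ℕ => (n : ℝ) ^ (1 - α * m) * (J (1 / n) : ℝ))
      atTop (nhds (max (X 0) 0 ^ α)) :=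
  stmt0_general α m hα τ hτ_mono hτ_rc hτ0 X hX_rc hX_int Y hY N hN J hJ hLLN
end

section
/- Let (Ω, F, P) be a probability space and Z : Ω × [0,∞) → ℝ a stochastic process with right-continuous sample paths (each Z_s is measurable). Assume that almost surely there exists n ∈ ℕ such that Z_s(ω) = 0 for all s ∈ [0, 1/n]. Then every event A in the germ σ-field ⋂_{t>0} σ(Z_s : 0 ≤ s ≤ t) satisfies P(A) ∈ {0,1}. -/
open MeasureTheory Set Filter Topology

/-! A germ event `A` lies in `σ(Z_s : s ≤ t)` for every `t > 0`, so it cannot separate two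
outcomes whose paths agree on some `[0, t]`. Almost every path vanishes on an initial interval,
and any two such paths agree on the shorter of the two intervals; hence `A` either contains or
misses a full-measure set of outcomes. -/

namespace MeasurableSpace

abbrev nonSeparating {Ω : Type*} (ω ω' : Ω) : MeasurableSpace Ω where
  MeasurableSet' B := ω ∈ B ↔ ω' ∈ B
  measurableSet_empty := Iff.rfl
  measurableSet_compl _ hB := not_congr hB
  measurableSet_iUnion _ hf := by simpa only [mem_iUnion] using exists_congr hf

theorem mem_iff_mem_of_measurableSet_iSup_comap {Ω ι : Type*} {β : ι → Type*}
    [∀ i, MeasurableSpace (β i)] {f : ∀ i, Ω → β i} {S : Set ι} {A : Set Ω}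
    (hA : MeasurableSet[⨆ i ∈ S, MeasurableSpace.comap (f i) inferInstance] A)
    {ω ω' : Ω} (h : ∀ i ∈ S, f i ω = f i ω') : ω ∈ A ↔ ω' ∈ A := by
  have hle : (⨆ i ∈ S, MeasurableSpace.comap (f i) inferInstance) ≤ nonSeparating ω ω' := by
    refine iSup₂_le fun i hi B ⟨C, _, hBC⟩ => ?_
    subst hBC
    show f i ω ∈ C ↔ f i ω' ∈ C
    rw [h i hi]
  exact hle A hA

end MeasurableSpace

theorem measure_eq_zero_or_one_of_forall_mem_iff_mem {Ω : Type*} [MeasurableSpace Ω]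
    {P : Measure Ω} [IsProbabilityMeasure P] {p : Ω → Prop} {A : Set Ω}
    (hp : ∀ᵐ ω ∂P, p ω) (hA : ∀ ω ω', p ω → p ω' → (ω ∈ A ↔ ω' ∈ A)) :
    P A = 0 ∨ P A = 1 := by
  by_cases hmeet : ∃ ω₀ ∈ A, p ω₀
  · obtain ⟨ω₀, hω₀A, hω₀⟩ := hmeet
    have hAc : P Aᶜ = 0 :=
      measure_mono_null (fun ω hω hpω => hω ((hA ω₀ ω hω₀ hpω).mp hω₀A)) (ae_iff.mp hp)
    right
    rw [measure_congr (ae_eq_univ.mpr hAc), measure_univ]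
  · push Not at hmeet
    left
    exact measure_eq_zero_iff_ae_notMem.mpr (hp.mono fun ω hpω hωA => hmeet ω hωA hpω)

theorem mem_iff_mem_of_eqOn_of_measurableSet_germ {Ω β : Type*} [MeasurableSpace β]
    {Z : ℝ → Ω → β} {A : Set Ω}
    (hA : MeasurableSet[⨅ t ∈ Ioi (0 : ℝ),
      ⨆ s ∈ Icc (0 : ℝ) t, MeasurableSpace.comap (Z s) inferInstance] A)
    {t : ℝ} (ht : 0 < t) {ω ω' : Ω} (h : ∀ s ∈ Icc 0 t, Z s ω = Z s ω') :
    ω ∈ A ↔ ω' ∈ A :=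
  MeasurableSpace.mem_iff_mem_of_measurableSet_iSup_comap
    (MeasurableSpace.le_def.mp (iInf₂_le t ht) A hA) h

theorem stmt4_general {Ω : Type*} [MeasurableSpace Ω] (P : Measure Ω) [IsProbabilityMeasure P]
    (Z : ℝ → Ω → ℝ)
    (hzero : ∀ᵐ ω ∂P, ∃ n : ℕ, 1 ≤ n ∧ ∀ s ∈ Set.Icc (0 : ℝ) (1 / n), Z s ω = 0)
    (A : Set Ω)
    (hA : MeasurableSet[⨅ t ∈ Set.Ioi (0 : ℝ),
      ⨆ s ∈ Set.Icc (0 : ℝ) t, MeasurableSpace.comap (Z s) inferInstance] A) :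
    P A = 0 ∨ P A = 1 := by
  refine measure_eq_zero_or_one_of_forall_mem_iff_mem hzero ?_
  rintro ω ω' ⟨n, hn, hω⟩ ⟨m, hm, hω'⟩
  have hpos : 0 < min (1 / (n : ℝ)) (1 / (m : ℝ)) := by
    have : (1 : ℝ) ≤ n := by exact_mod_cast hn
    have : (1 : ℝ) ≤ m := by exact_mod_cast hm
    positivity
  refine mem_iff_mem_of_eqOn_of_measurableSet_germ hA hpos fun s hs => ?_
  rw [hω s (Icc_subset_Icc_right (min_le_left _ _) hs),
    hω' s (Icc_subset_Icc_right (min_le_right _ _) hs)]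

/-- If a right-continuous process `Z` almost surely vanishes on an initial interval
`[0, 1/n]`, then its germ σ-field `⋂_{t>0} σ(Z_s : 0 ≤ s ≤ t)` is `P`-trivial. -/
theorem stmt4 {Ω : Type*} [MeasurableSpace Ω] (P : Measure Ω) [IsProbabilityMeasure P]
    (Z : ℝ → Ω → ℝ) (hZ_meas : ∀ s : ℝ, Measurable (Z s))
    (hZ_rc : ∀ ω : Ω, ∀ s ≥ (0 : ℝ), ContinuousWithinAt (fun u => Z u ω) (Set.Ici s) s)
    (hzero : ∀ᵐ ω ∂P, ∃ n : ℕ, 1 ≤ n ∧ ∀ s ∈ Set.Icc (0 : ℝ) (1 / n), Z s ω = 0)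
    (A : Set Ω)
    (hA : MeasurableSet[⨅ t ∈ Set.Ioi (0 : ℝ),
      ⨆ s ∈ Set.Icc (0 : ℝ) t, MeasurableSpace.comap (Z s) inferInstance] A) :
    P A = 0 ∨ P A = 1 :=
  stmt4_general P Z hzero A hA
end

section
/- Let (Ω, F, P) be a probability space, ξ : Ω → (0,∞) a random variable, and for each t ∈ (0,1) let G_t : Ω → [0,∞) be a random variable that is independent of ξ, has the gamma distribution with shape parameter t and rate 1, and such that G_t → 0 almost surely as t → 0+. Then E[ | ξ^{−t} exp((1 − 1/ξ) G_t) − 1 | ] → 0 as t → 0+, i.e. the densities D_t = ξ^{−t} exp((1 − 1/ξ) G_t) converge to 1 in L¹(P). -/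
open MeasureTheory ProbabilityTheory Set Filter Topology
open scoped ENNReal

/-! Given `ξ = x`, the variable `D_t` is the density of `Gamma(t, rate 1/x)` with respect to the
law `Gamma(t, rate 1)` of `G_t`, evaluated at `G_t`; by independence `E[D_t] = 1`. As `D_t → 1`
almost surely, Scheffé's lemma upgrades this to convergence in `L¹`. -/

section Scheffe

variable {Ω ι : Type*} [MeasurableSpace Ω] {μ : Measure Ω} {l : Filter ι}

lemma abs_sub_eq_sub_add_two_mul_max (a b : ℝ) : |a - b| = (a - b) + 2 * max (b - a) 0 := by
  rcases le_total a b with h | h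
  · rw [abs_of_nonpos (by linarith), max_eq_left (by linarith)]; ring
  · rw [abs_of_nonneg (by linarith), max_eq_right (by linarith)]; ring

/-- Scheffé's lemma. -/
theorem tendsto_integral_abs_sub_of_tendsto_integral [l.IsCountablyGenerated]
    {F : ι → Ω → ℝ} {f : Ω → ℝ} (hF_int : ∀ᶠ i in l, Integrable (F i) μ)
    (hF_nonneg : ∀ᶠ i in l, 0 ≤ᵐ[μ] F i) (hf : Integrable f μ)
    (hF_lim : ∀ᵐ ω ∂μ, Tendsto (fun i => F i ω) l (𝓝 (f ω)))
    (hF_integral : Tendsto (fun i => ∫ ω, F i ω ∂μ) l (𝓝 (∫ ω, f ω ∂μ))) :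
    Tendsto (fun i => ∫ ω, |F i ω - f ω| ∂μ) l (𝓝 0) := by
  -- `(f - F i)⁺ ≤ |f|` because `F i ≥ 0`, so dominated convergence applies to the negative parts.
  have h_neg : Tendsto (fun i => ∫ ω, max (f ω - F i ω) 0 ∂μ) l (𝓝 0) := by
    have h := tendsto_integral_filter_of_dominated_convergence
      (F := fun i ω => max (f ω - F i ω) 0) (fun ω => |f ω|)
      (hF_int.mono fun i hi => (hf.sub hi).pos_part.aestronglyMeasurable)
      (hF_nonneg.mono fun i hi => hi.mono fun ω (hω : 0 ≤ F i ω) => by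
        rw [Real.norm_of_nonneg (le_max_right _ _)]
        exact max_le (by linarith [le_abs_self (f ω)]) (abs_nonneg _))
      hf.abs (hF_lim.mono fun ω hω => (tendsto_const_nhds.sub hω).max tendsto_const_nhds)
    simpa using h
  have h_split : ∀ᶠ i in l, ∫ ω, |F i ω - f ω| ∂μ
      = (∫ ω, F i ω ∂μ - ∫ ω, f ω ∂μ) + 2 * ∫ ω, max (f ω - F i ω) 0 ∂μ := by
    filter_upwards [hF_int] with i hi
    have h_diff : Integrable (fun ω => F i ω - f ω) μ := hi.sub hf
    have h_neg_part : Integrable (fun ω => 2 * max (f ω - F i ω) 0) μ :=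
      (hf.sub hi).pos_part.const_mul 2
    simp_rw [abs_sub_eq_sub_add_two_mul_max]
    rw [integral_add h_diff h_neg_part, integral_sub hi hf, integral_const_mul]
  refine Tendsto.congr' (EventuallyEq.symm h_split) ?_
  simpa using (hF_integral.sub (tendsto_const_nhds (x := ∫ ω, f ω ∂μ))).add (h_neg.const_mul 2)

end Scheffe

/-- The density of the gamma distribution of shape `t` and rate `1 / x` with respect to the
gamma distribution of shape `t` and rate `1`, evaluated at `y`. -/
noncomputable def gammaDensityRatio (t x y : ℝ) : ℝ := x ^ (-t) * Real.exp ((1 - 1 / x) * y)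

lemma gammaDensityRatio_nonneg (t : ℝ) {x : ℝ} (hx : 0 ≤ x) (y : ℝ) :
    0 ≤ gammaDensityRatio t x y :=
  mul_nonneg (Real.rpow_nonneg hx _) (Real.exp_nonneg _)

lemma measurable_gammaDensityRatio (t : ℝ) :
    Measurable fun p : ℝ × ℝ => gammaDensityRatio t p.1 p.2 := by
  unfold gammaDensityRatio
  fun_prop

lemma gammaPDF_mul_gammaDensityRatio {t x : ℝ} (hx : 0 < x) (y : ℝ) :
    gammaPDF t 1 y * ENNReal.ofReal (gammaDensityRatio t x y) = gammaPDF t (1 / x) y := by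
  rcases lt_or_ge y 0 with hy | hy
  · rw [gammaPDF_of_neg hy, gammaPDF_of_neg hy, zero_mul]
  rw [gammaPDF_of_nonneg hy, gammaPDF_of_nonneg hy,
    ← ENNReal.ofReal_mul' (gammaDensityRatio_nonneg t hx.le y), gammaDensityRatio,
    Real.one_rpow, Real.rpow_neg_eq_inv_rpow, ← one_div]
  congr 1
  have h_exp : Real.exp (-(1 * y)) * Real.exp ((1 - 1 / x) * y) = Real.exp (-(1 / x * y)) := by
    rw [← Real.exp_add]
    ring_nf
  linear_combination (1 / x) ^ t / Real.Gamma t * y ^ (t - 1) * h_exp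

lemma lintegral_gammaDensityRatio {t x : ℝ} (ht : 0 < t) (hx : 0 < x) :
    ∫⁻ y, ENNReal.ofReal (gammaDensityRatio t x y) ∂gammaMeasure t 1 = 1 := by
  have h_pdf : Measurable (gammaPDF t 1) := (measurable_gammaPDFReal t 1).ennreal_ofReal
  have h_ratio : Measurable fun y => ENNReal.ofReal (gammaDensityRatio t x y) :=
    ((measurable_gammaDensityRatio t).comp measurable_prodMk_left).ennreal_ofReal
  rw [gammaMeasure, lintegral_withDensity_eq_lintegral_mul _ h_pdf h_ratio]
  simp_rw [Pi.mul_apply, gammaPDF_mul_gammaDensityRatio hx]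
  exact lintegral_gammaPDF_eq_one ht (by positivity)

lemma tendsto_gammaDensityRatio {l : Filter ℝ} (hl : l ≤ 𝓝 0) {x : ℝ} (hx : x ≠ 0)
    {g : ℝ → ℝ} (hg : Tendsto g l (𝓝 0)) :
    Tendsto (fun t => gammaDensityRatio t x (g t)) l (𝓝 1) := by
  have h_pow : Tendsto (fun t : ℝ => x ^ (-t)) l (𝓝 1) := by
    have h := ((Real.continuousAt_const_rpow hx).tendsto.comp
      (continuous_neg.tendsto (0 : ℝ))).mono_left hl
    simpa [Function.comp_def] using h
  have h_exp : Tendsto (fun t => Real.exp ((1 - 1 / x) * g t)) l (𝓝 1) := by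
    simpa [Function.comp_def] using
      (Real.continuous_exp.tendsto _).comp (hg.const_mul (1 - 1 / x))
  simpa [gammaDensityRatio] using h_pow.mul h_exp

lemma ProbabilityTheory.IndepFun.lintegral_comp_eq {Ω α β : Type*} [MeasurableSpace Ω]
    [MeasurableSpace α] [MeasurableSpace β] {μ : Measure Ω} [IsFiniteMeasure μ]
    {X : Ω → α} {Y : Ω → β}
    (hXY : IndepFun X Y μ) (hX : AEMeasurable X μ) (hY : AEMeasurable Y μ)
    {f : α × β → ℝ≥0∞} (hf : Measurable f) :
    ∫⁻ ω, f (X ω, Y ω) ∂μ = ∫⁻ x, ∫⁻ y, f (x, y) ∂μ.map Y ∂μ.map X := by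
  rw [← lintegral_map' hf.aemeasurable (hX.prodMk hY), hXY.map_prod_eq_prod_map_map hX hY,
    lintegral_prod _ hf.aemeasurable]

section Independent

variable {Ω : Type*} [MeasurableSpace Ω] {P : Measure Ω} [IsProbabilityMeasure P]
  {ξ G : Ω → ℝ} {t : ℝ}

lemma lintegral_gammaDensityRatio_comp_eq_one (ht : 0 < t) (hξ : AEMeasurable ξ P)
    (hξ_pos : ∀ᵐ ω ∂P, 0 < ξ ω) (hG : AEMeasurable G P) (hξG : IndepFun ξ G P)
    (hG_law : P.map G = gammaMeasure t 1) :
    ∫⁻ ω, ENNReal.ofReal (gammaDensityRatio t (ξ ω) (G ω)) ∂P = 1 := by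
  have hξ_pos' : ∀ᵐ x ∂P.map ξ, 0 < x :=
    (ae_map_iff hξ measurableSet_Ioi).2 hξ_pos
  have : IsProbabilityMeasure (P.map ξ) := Measure.isProbabilityMeasure_map hξ
  rw [hξG.lintegral_comp_eq hξ hG (measurable_gammaDensityRatio t).ennreal_ofReal, hG_law,
    lintegral_congr_ae (hξ_pos'.mono fun x hx => lintegral_gammaDensityRatio ht hx)]
  simp

lemma integrable_gammaDensityRatio_comp_and_integral_eq_one (ht : 0 < t)
    (hξ : AEMeasurable ξ P) (hξ_pos : ∀ᵐ ω ∂P, 0 < ξ ω) (hG : AEMeasurable G P)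
    (hξG : IndepFun ξ G P)
    (hG_law : P.map G = gammaMeasure t 1) :
    Integrable (fun ω => gammaDensityRatio t (ξ ω) (G ω)) P ∧
      ∫ ω, gammaDensityRatio t (ξ ω) (G ω) ∂P = 1 := by
  have h_meas : AEStronglyMeasurable (fun ω => gammaDensityRatio t (ξ ω) (G ω)) P :=
    ((measurable_gammaDensityRatio t).comp_aemeasurable (hξ.prodMk hG)).aestronglyMeasurable
  have h_nonneg : 0 ≤ᵐ[P] fun ω => gammaDensityRatio t (ξ ω) (G ω) :=
    hξ_pos.mono fun ω hω => gammaDensityRatio_nonneg t hω.le _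
  have h_lint := lintegral_gammaDensityRatio_comp_eq_one ht hξ hξ_pos hG hξG hG_law
  refine ⟨(lintegral_ofReal_ne_top_iff_integrable h_meas h_nonneg).1 (by simp [h_lint]), ?_⟩
  rw [integral_eq_lintegral_of_nonneg_ae h_nonneg h_meas, h_lint, ENNReal.toReal_one]

end Independent

theorem stmt6_general {Ω : Type*} [MeasurableSpace Ω] (P : Measure Ω) [IsProbabilityMeasure P]
    (ξ : Ω → ℝ) (hξ_meas : Measurable ξ) (hξ_pos : ∀ ω, 0 < ξ ω)
    (G : ℝ → Ω → ℝ)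
    (hG_meas : ∀ t ∈ Set.Ioo (0 : ℝ) 1, Measurable (G t))
    (hindep : ∀ t ∈ Set.Ioo (0 : ℝ) 1, IndepFun ξ (G t) P)
    (hgamma : ∀ t ∈ Set.Ioo (0 : ℝ) 1, Measure.map (G t) P = gammaMeasure t 1)
    (hG0 : ∀ᵐ ω ∂P, Tendsto (fun t => G t ω) (𝓝[>] (0 : ℝ)) (nhds 0)) :
    Tendsto (fun t => ∫ ω, |ξ ω ^ (-t) * Real.exp ((1 - 1 / ξ ω) * G t ω) - 1| ∂P)
      (𝓝[>] (0 : ℝ)) (nhds 0) := by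
  have h_density : ∀ᶠ t in 𝓝[>] (0 : ℝ),
      Integrable (fun ω => gammaDensityRatio t (ξ ω) (G t ω)) P ∧
        ∫ ω, gammaDensityRatio t (ξ ω) (G t ω) ∂P = 1 := by
    filter_upwards [Ioo_mem_nhdsGT_of_mem ⟨le_rfl, one_pos⟩] with t ht
    exact integrable_gammaDensityRatio_comp_and_integral_eq_one ht.1 hξ_meas.aemeasurable
      (ae_of_all _ hξ_pos) (hG_meas t ht).aemeasurable (hindep t ht) (hgamma t ht)
  refine tendsto_integral_abs_sub_of_tendsto_integral
    (F := fun t ω => gammaDensityRatio t (ξ ω) (G t ω)) (f := fun _ => 1)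
    (h_density.mono fun _ h => h.1)
    (Eventually.of_forall fun t => ae_of_all _ fun ω => gammaDensityRatio_nonneg t (hξ_pos ω).le _)
    (integrable_const 1) ?_ ?_
  · filter_upwards [hG0] with ω hω
    exact tendsto_gammaDensityRatio nhdsWithin_le_nhds (hξ_pos ω).ne' hω
  · simpa using tendsto_const_nhds.congr' (h_density.mono fun _ h => h.2.symm)

/-- Scheffé step in Proposition 1: if `ξ > 0` is independent of `G t`, `G t` is gamma
distributed with shape `t` and rate `1`, and `G t → 0` a.s. as `t → 0+`, then the
densities `D t = ξ^(-t) exp((1 - 1/ξ) G t)` converge to `1` in `L¹(P)` as `t → 0+`. -/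
theorem stmt6 {Ω : Type*} [MeasurableSpace Ω] (P : Measure Ω) [IsProbabilityMeasure P]
    (ξ : Ω → ℝ) (hξ_meas : Measurable ξ) (hξ_pos : ∀ ω, 0 < ξ ω)
    (G : ℝ → Ω → ℝ)
    (hG_meas : ∀ t ∈ Set.Ioo (0 : ℝ) 1, Measurable (G t))
    (hG_nonneg : ∀ t ∈ Set.Ioo (0 : ℝ) 1, ∀ ω, 0 ≤ G t ω)
    (hindep : ∀ t ∈ Set.Ioo (0 : ℝ) 1, IndepFun ξ (G t) P)
    (hgamma : ∀ t ∈ Set.Ioo (0 : ℝ) 1, Measure.map (G t) P = gammaMeasure t 1)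
    (hG0 : ∀ᵐ ω ∂P, Tendsto (fun t => G t ω) (𝓝[>] (0 : ℝ)) (nhds 0)) :
    Tendsto (fun t => ∫ ω, |ξ ω ^ (-t) * Real.exp ((1 - 1 / ξ ω) * G t ω) - 1| ∂P)
      (𝓝[>] (0 : ℝ)) (nhds 0) :=
  stmt6_general P ξ hξ_meas hξ_pos G hG_meas hindep hgamma hG0
end

section
/- Let α ∈ (0,1) and m > 2/α be real numbers, let x₀ ∈ ℝ, and let d, r, w : (0,∞) → ℝ be functions such that sup_{0<s≤ε} |r(s)| → 0 as ε → 0+. For ε > 0 and b ∈ ℝ let N(ε,b) be the number of s ∈ (0,ε] with b²·d(s)² > ε^m; for a > 0 let K(ε,a) be the number of s ∈ (0,ε] with w(s)² > a·ε^m; and let J(ε) be the number of s ∈ (0,ε] with (x₀·d(s) + r(s)·d(s) + w(s))² > ε^m. Assume: (i) for every b > 0, lim_{n→∞} n^{1−αm} N(1/n, b) = b^{2α}; and (ii) there is a strictly increasing sequence of positive integers (n(k)) such that for every rational a > 0, lim_{k→∞} n(k)^{1−αm} K(1/n(k), a) = 0. Then lim_{k→∞} n(k)^{1−αm} J(1/n(k))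 = |x₀|^{2α}. -/
/-!
On `(0, ε]` with `ε` small we have `|r| < δ`, so the coefficient `x₀ + r` of `d` lies within
`δ` of `x₀`. By the triangle inequality, a large jump of `(x₀ + r) d + w` is then a large jump
of `b d` for every `b` with `|x₀| + δ ≤ (1 - θ) b`, unless `w` alone jumps above `θ` times
the threshold; symmetrically, a large jump of `b d` with `(1 + θ) b ≤ |x₀| - δ` is a large
jump of `(x₀ + r) d + w` unless `w` does. For rational `θ` the renormalized counts of these
exceptional jumps of `w` vanish along `n(k)`, so the limsup of the renormalized counts is at
most `b^{2α}` for every `b > |x₀|` and the liminf at least `b^{2α}` for every `b < |x₀|`;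
continuity of `b ↦ b^{2α}` closes the squeeze.
-/

open Set Filter Topology ENNReal

lemma abs_le_mul_sqrt_of_sq_le {w θ t : ℝ} (hθ : 0 ≤ θ) (hw : w ^ 2 ≤ θ ^ 2 * t) :
    |w| ≤ θ * √t := by
  simpa [Real.sqrt_mul (sq_nonneg θ), Real.sqrt_sq hθ] using Real.abs_le_sqrt hw

lemma sq_mul_add_le_of_abs_le {y v w b θ t : ℝ} (hθ₀ : 0 ≤ θ) (hθ₁ : θ ≤ 1)
    (hy : |y| ≤ (1 - θ) * |b|) (hv : b ^ 2 * v ^ 2 ≤ t) (hw : w ^ 2 ≤ θ ^ 2 * t) :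
    (y * v + w) ^ 2 ≤ t := by
  have ht : 0 ≤ t := (by positivity : 0 ≤ b ^ 2 * v ^ 2).trans hv
  have hbv : |b| * |v| ≤ √t := by rw [← abs_mul]; exact Real.abs_le_sqrt (by linarith)
  have hw' := abs_le_mul_sqrt_of_sq_le hθ₀ hw
  have key : |y * v + w| ≤ √t :=
    calc |y * v + w| ≤ |y| * |v| + |w| := by rw [← abs_mul]; exact abs_add_le _ _
      _ ≤ (1 - θ) * (|b| * |v|) + θ * √t := by
        rw [← mul_assoc]; gcongr
      _ ≤ (1 - θ) * √t + θ * √t := by gcongr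
      _ = √t := by ring
  exact (Real.sq_le ht).2 (abs_le.1 key)

lemma sq_mul_le_of_sq_mul_add_le {y v w b θ t : ℝ} (hθ : 0 ≤ θ)
    (hy : (1 + θ) * |b| ≤ |y|) (h : (y * v + w) ^ 2 ≤ t) (hw : w ^ 2 ≤ θ ^ 2 * t) :
    b ^ 2 * v ^ 2 ≤ t := by
  have ht : 0 ≤ t := (sq_nonneg _).trans h
  have hw' := abs_le_mul_sqrt_of_sq_le hθ hw
  have key : (1 + θ) * (|b| * |v|) ≤ (1 + θ) * √t :=
    calc (1 + θ) * (|b| * |v|) ≤ |y| * |v| := by rw [← mul_assoc]; gcongr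
      _ ≤ |y * v + w| + |w| := by
        rw [← abs_mul]; simpa using abs_sub (y * v + w) w
      _ ≤ √t + θ * √t := add_le_add (Real.abs_le_sqrt h) hw'
      _ = (1 + θ) * √t := by ring
  have hbv : |b * v| ≤ √t := by
    rw [abs_mul]; exact le_of_mul_le_mul_left key (by linarith)
  rw [← mul_pow]
  exact (Real.sq_le ht).2 (abs_le.1 hbv)

lemma encard_sep_le_add_of_forall {α : Type*} {S : Set α} {p q e : α → Prop}
    (h : ∀ s ∈ S, p s → q s ∨ e s) :
    {s ∈ S | p s}.encard ≤ {s ∈ S | q s}.encard + {s ∈ S | e s}.encard :=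
  calc {s ∈ S | p s}.encard ≤ ({s ∈ S | q s} ∪ {s ∈ S | e s}).encard :=
        encard_mono fun s ⟨hs, hp⟩ => (h s hs hp).imp (⟨hs, ·⟩) (⟨hs, ·⟩)
    _ ≤ _ := encard_union_le _ _

namespace ENNReal

variable {ι : Type*} {l : Filter ι} [NeBot l] {f u v : ι → ℝ≥0∞} {L : ℝ≥0∞}

lemma limsup_le_of_eventually_le_add (h : ∀ᶠ i in l, f i ≤ u i + v i)
    (hu : Tendsto u l (𝓝 L)) (hv : Tendsto v l (𝓝 0)) : limsup f l ≤ L :=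
  calc limsup f l ≤ limsup (fun i => u i + v i) l := limsup_le_limsup h
    _ = L := by simpa using (hu.add hv).limsup_eq

lemma le_liminf_of_eventually_le_add (h : ∀ᶠ i in l, u i ≤ f i + v i)
    (hu : Tendsto u l (𝓝 L)) (hv : Tendsto v l (𝓝 0)) : L ≤ liminf f l := by
  have huv : Tendsto (fun i => u i - v i) l (𝓝 L) := by
    simpa using ENNReal.Tendsto.sub hu hv (Or.inr zero_ne_top)
  calc L = liminf (fun i => u i - v i) l := huv.liminf_eq.symm
    _ ≤ liminf f l := liminf_le_liminf (h.mono fun i hi => tsub_le_iff_right.2 hi)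

end ENNReal

lemma tendsto_of_forall_limsup_le_of_forall_le_liminf {ι β : Type*} {l : Filter ι}
    [CompleteLinearOrder β] [TopologicalSpace β] [OrderTopology β]
    {f : ι → β} {g : ℝ → β} {x : ℝ} (hg : ContinuousAt g x)
    (hup : ∀ b, x < b → limsup f l ≤ g b) (hlow : ∀ b < x, g b ≤ liminf f l) :
    Tendsto f l (𝓝 (g x)) :=
  tendsto_of_le_liminf_of_limsup_le
    (le_of_tendsto (hg.tendsto.mono_left nhdsWithin_le_nhds)
      (eventually_nhdsWithin_of_forall (s := Iio x) hlow))
    (ge_of_tendsto (hg.tendsto.mono_left nhdsWithin_le_nhds)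
      (eventually_nhdsWithin_of_forall (s := Ioi x) hup))

section PerturbedJumps

variable {ι : Type*} {l : Filter ι} {ε τ : ι → ℝ} {x₀ : ℝ} {r : ℝ → ℝ}

lemma eventually_forall_Ioc_abs_lt
    (hr : ∀ δ > (0 : ℝ), ∃ η > (0 : ℝ), ∀ s ∈ Ioc 0 η, |r s| < δ)
    (hε : Tendsto ε l (𝓝 0)) {δ : ℝ} (hδ : 0 < δ) :
    ∀ᶠ i in l, ∀ s ∈ Ioc 0 (ε i), |r s| < δ := by
  obtain ⟨ε₀, hε₀, hsmall⟩ := hr δ hδ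
  filter_upwards [hε.eventually_le_const hε₀] with i hi s hs
  exact hsmall s (Ioc_subset_Ioc_right hi hs)

variable [NeBot l] {c : ι → ℝ≥0∞} {d w : ℝ → ℝ} {b : ℝ} {L : ℝ≥0∞}

lemma limsup_encard_le_of_abs_lt
    (hr : ∀ δ > (0 : ℝ), ∃ η > (0 : ℝ), ∀ s ∈ Ioc 0 η, |r s| < δ)
    (hε : Tendsto ε l (𝓝 0)) (hb : |x₀| < b)
    (hN : Tendsto (fun i => c i * {s ∈ Ioc 0 (ε i) | τ i < b ^ 2 * d s ^ 2}.encard) l (𝓝 L))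
    (hK : ∀ a : ℚ, 0 < a →
      Tendsto (fun i => c i * {s ∈ Ioc 0 (ε i) | a * τ i < w s ^ 2}.encard) l (𝓝 0)) :
    limsup (fun i => c i *
      {s ∈ Ioc 0 (ε i) | τ i < ((x₀ + r s) * d s + w s) ^ 2}.encard) l ≤ L := by
  have hb₀ : 0 < b := (abs_nonneg x₀).trans_lt hb
  obtain ⟨θ, hθ₀, hθ⟩ := exists_rat_btwn (div_pos (sub_pos.2 hb) hb₀)
  rw [lt_div_iff₀ hb₀] at hθ
  have hθ₁ : (θ : ℝ) ≤ 1 := by nlinarith [abs_nonneg x₀]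
  refine ENNReal.limsup_le_of_eventually_le_add ?_ hN
    (hK (θ ^ 2) (by exact_mod_cast pow_pos hθ₀ 2))
  filter_upwards [eventually_forall_Ioc_abs_lt hr hε (by linarith : 0 < (1 - θ) * b - |x₀|)]
    with i hi
  rw [← mul_add]
  gcongr
  norm_cast
  refine encard_sep_le_add_of_forall fun s hs hjump => ?_
  by_contra! hsmall
  refine (sq_mul_add_le_of_abs_le hθ₀.le hθ₁ ?_ hsmall.1
    (by exact_mod_cast hsmall.2)).not_gt hjump
  rw [abs_of_pos hb₀]
  linarith [abs_add_le x₀ (r s), hi s hs]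

lemma le_liminf_encard_of_abs_lt
    (hr : ∀ δ > (0 : ℝ), ∃ η > (0 : ℝ), ∀ s ∈ Ioc 0 η, |r s| < δ)
    (hε : Tendsto ε l (𝓝 0)) (hb₀ : 0 < b) (hb : b < |x₀|)
    (hN : Tendsto (fun i => c i * {s ∈ Ioc 0 (ε i) | τ i < b ^ 2 * d s ^ 2}.encard) l (𝓝 L))
    (hK : ∀ a : ℚ, 0 < a →
      Tendsto (fun i => c i * {s ∈ Ioc 0 (ε i) | a * τ i < w s ^ 2}.encard) l (𝓝 0)) :
    L ≤ liminf (fun i => c i *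
      {s ∈ Ioc 0 (ε i) | τ i < ((x₀ + r s) * d s + w s) ^ 2}.encard) l := by
  obtain ⟨θ, hθ₀, hθ⟩ := exists_rat_btwn (div_pos (sub_pos.2 hb) hb₀)
  rw [lt_div_iff₀ hb₀] at hθ
  refine ENNReal.le_liminf_of_eventually_le_add ?_ hN
    (hK (θ ^ 2) (by exact_mod_cast pow_pos hθ₀ 2))
  filter_upwards [eventually_forall_Ioc_abs_lt hr hε (by linarith : 0 < |x₀| - (1 + θ) * b)]
    with i hi
  rw [← mul_add]
  gcongr
  norm_cast
  refine encard_sep_le_add_of_forall fun s hs hjump => ?_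
  by_contra! hsmall
  refine (sq_mul_le_of_sq_mul_add_le hθ₀.le ?_ hsmall.1
    (by exact_mod_cast hsmall.2)).not_gt hjump
  rw [abs_of_pos hb₀]
  linarith [abs_sub_abs_le_abs_add x₀ (r s), hi s hs]

end PerturbedJumps

theorem stmt8_general (α m : ℝ) (hα : α ∈ Set.Ioo (0 : ℝ) 1)
    (x₀ : ℝ) (d r w : ℝ → ℝ)
    (hr : ∀ δ > (0 : ℝ), ∃ ε > (0 : ℝ), ∀ s ∈ Set.Ioc (0 : ℝ) ε, |r s| < δ)
    (N : ℝ → ℝ → ℝ≥0∞)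
    (hN : ∀ ε > (0 : ℝ), ∀ b : ℝ,
      N ε b = ({s ∈ Set.Ioc (0 : ℝ) ε | b ^ 2 * d s ^ 2 > ε ^ m}.encard : ℝ≥0∞))
    (K : ℝ → ℝ → ℝ≥0∞)
    (hK : ∀ ε > (0 : ℝ), ∀ a : ℝ,
      K ε a = ({s ∈ Set.Ioc (0 : ℝ) ε | w s ^ 2 > a * ε ^ m}.encard : ℝ≥0∞))
    (J : ℝ → ℝ≥0∞)
    (hJ : ∀ ε > (0 : ℝ),
      J ε = ({s ∈ Set.Ioc (0 : ℝ) ε |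
        (x₀ * d s + r s * d s + w s) ^ 2 > ε ^ m}.encard : ℝ≥0∞))
    (hNlim : ∀ b > (0 : ℝ),
      Tendsto (fun n : ℕ => (n : ℝ≥0∞) ^ (1 - α * m) * N (1 / (n : ℝ)) b)
        atTop (nhds (ENNReal.ofReal b ^ (2 * α))))
    (nk : ℕ → ℕ) (hnk_mono : StrictMono nk)
    (hKlim : ∀ a : ℚ, 0 < a →
      Tendsto (fun k : ℕ => (nk k : ℝ≥0∞) ^ (1 - α * m) * K (1 / (nk k : ℝ)) (a : ℝ))
        atTop (nhds 0)) :
    Tendsto (fun k : ℕ => (nk k : ℝ≥0∞) ^ (1 - α * m) * J (1 / (nk k : ℝ)))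
      atTop (nhds (ENNReal.ofReal |x₀| ^ (2 * α))) := by
  have hε : Tendsto (fun k => 1 / (nk k : ℝ)) atTop (𝓝[>] 0) := by
    simpa only [one_div, Function.comp_def] using tendsto_inv_atTop_nhdsGT_zero.comp
      (tendsto_natCast_atTop_atTop.comp hnk_mono.tendsto_atTop)
  have hε₀ := hε.mono_right nhdsWithin_le_nhds
  have hpos : ∀ᶠ k in atTop, 0 < 1 / (nk k : ℝ) := hε eventually_mem_nhdsWithin
  have hNk : ∀ b > (0 : ℝ), Tendsto (fun k => (nk k : ℝ≥0∞) ^ (1 - α * m) *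
      {s ∈ Ioc 0 (1 / (nk k : ℝ)) | (1 / (nk k : ℝ)) ^ m < b ^ 2 * d s ^ 2}.encard)
      atTop (𝓝 (ENNReal.ofReal b ^ (2 * α))) := fun b hb =>
    ((hNlim b hb).comp hnk_mono.tendsto_atTop).congr' (hpos.mono fun k hk => by
      simp only [Function.comp_apply, hN _ hk])
  have hKk : ∀ a : ℚ, 0 < a → Tendsto (fun k => (nk k : ℝ≥0∞) ^ (1 - α * m) *
      {s ∈ Ioc 0 (1 / (nk k : ℝ)) | a * (1 / (nk k : ℝ)) ^ m < w s ^ 2}.encard)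
      atTop (𝓝 0) := fun a ha =>
    (hKlim a ha).congr' (hpos.mono fun k hk => by simp only [hK _ hk])
  refine Tendsto.congr' (hpos.mono fun k hk => by simp only [hJ _ hk, ← add_mul])
    (tendsto_of_forall_limsup_le_of_forall_le_liminf
      (g := fun b => ENNReal.ofReal b ^ (2 * α))
      (ENNReal.continuous_rpow_const.comp ENNReal.continuous_ofReal).continuousAt
      (fun b hb =>
        limsup_encard_le_of_abs_lt hr hε₀ hb (hNk b ((abs_nonneg x₀).trans_lt hb)) hKk)
      (fun b hb => ?_))
  rcases le_or_gt b 0 with hb₀ | hb₀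
  · have h2α : 0 < 2 * α := by linarith [hα.1]
    simp [ENNReal.ofReal_of_nonpos hb₀, ENNReal.zero_rpow_of_pos h2α]
  · exact le_liminf_encard_of_abs_lt hr hε₀ hb₀ hb (hNk b hb₀) hKk

/-- Deterministic squeeze argument of Proposition 2: if the counts of large jumps of
the driving term `b * d` satisfy a stable-type law of large numbers with limit
`b ^ (2α)`, the coefficient `r` tends to `0` uniformly on small intervals, and the
error counts `K` vanish along a subsequence, then the renormalized counts of large
jumps of `(x₀ + r) * d + w` recover `|x₀| ^ (2α)` along that subsequence.
Counts are taken in `ℝ≥0∞` since they may a priori be infinite. -/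
theorem stmt8 (α m : ℝ) (hα : α ∈ Set.Ioo (0 : ℝ) 1) (hm : m > 2 / α)
    (x₀ : ℝ) (d r w : ℝ → ℝ)
    (hr : ∀ δ > (0 : ℝ), ∃ ε > (0 : ℝ), ∀ s ∈ Set.Ioc (0 : ℝ) ε, |r s| < δ)
    (N : ℝ → ℝ → ℝ≥0∞)
    (hN : ∀ ε > (0 : ℝ), ∀ b : ℝ,
      N ε b = ({s ∈ Set.Ioc (0 : ℝ) ε | b ^ 2 * d s ^ 2 > ε ^ m}.encard : ℝ≥0∞))
    (K : ℝ → ℝ → ℝ≥0∞)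
    (hK : ∀ ε > (0 : ℝ), ∀ a : ℝ,
      K ε a = ({s ∈ Set.Ioc (0 : ℝ) ε | w s ^ 2 > a * ε ^ m}.encard : ℝ≥0∞))
    (J : ℝ → ℝ≥0∞)
    (hJ : ∀ ε > (0 : ℝ),
      J ε = ({s ∈ Set.Ioc (0 : ℝ) ε |
        (x₀ * d s + r s * d s + w s) ^ 2 > ε ^ m}.encard : ℝ≥0∞))
    (hNlim : ∀ b > (0 : ℝ),
      Tendsto (fun n : ℕ => (n : ℝ≥0∞) ^ (1 - α * m) * N (1 / (n : ℝ)) b)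
        atTop (nhds (ENNReal.ofReal b ^ (2 * α))))
    (nk : ℕ → ℕ) (hnk_mono : StrictMono nk) (hnk_pos : ∀ k, 0 < nk k)
    (hKlim : ∀ a : ℚ, 0 < a →
      Tendsto (fun k : ℕ => (nk k : ℝ≥0∞) ^ (1 - α * m) * K (1 / (nk k : ℝ)) (a : ℝ))
        atTop (nhds 0)) :
    Tendsto (fun k : ℕ => (nk k : ℝ≥0∞) ^ (1 - α * m) * J (1 / (nk k : ℝ)))
      atTop (nhds (ENNReal.ofReal |x₀| ^ (2 * α))) :=
  stmt8_general α m hα x₀ d r w hr N hN K hK J hJ hNlim nk hnk_mono hKlim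
end

section
/- Let α ∈ (0,1) and m > 2/α be real numbers, and let (Ω, F, P) be a probability space. Let X : Ω × [0,∞) → ℝ be a process whose sample paths are right-continuous and locally integrable, and let τ : Ω × [0,∞) → [0,∞) be a process whose sample paths are nondecreasing and right-continuous with τ_0 = 0, with all X_s and τ_s measurable. Define Ŷ_ℓ = ∫_0^{τ_ℓ} X_u du, and for ε > 0, b ∈ ℝ let N_{ε,b} be the number of s ∈ (0,ε] with b·(τ_s − τ_{s−}) > ε^m. Assume that almost surely, for every b > 0, lim_{n→∞} n^{1−αm} N_{1/n,b} = b^α. Then there exists a random variable Z measurable with respect to the germ σ-field ⋂_{t>0} σ(Ŷ_s : 0 ≤ s ≤ t) such that Z = X_0 almost surely. -/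
/-!
Near time `0` the process `Ŷ` moves like `X 0 · τ`: by right-continuity of `X` at `0`, for any
`a < X 0 < b` every increment `Ŷ r - Ŷ q` with `r` small lies between `a (τ r - τ q)` and
`b (τ r - τ q)`. Hence the jumps of `Ŷ` larger than `ε ^ m` on `(0, ε]` are, up to factors
arbitrarily close to `1`, the jumps of `τ` with `(X 0)⁺ Δτ > ε ^ m`, and the law of large numbers
for their number identifies `((X 0)⁺) ^ α` as the limit of the renormalised counts; `-Ŷ` gives
`((X 0)⁻) ^ α` in the same way.

To make the counts functions of countably many values of `Ŷ` on `[0, t]`, jumps are counted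
through increments over the grid of mesh `ε / j`: as `j → ∞`, the number of cells with increment
above `θ` is squeezed between the numbers of jumps above `θ` and above any `θ' < θ`. The upper
bound comes from a Lebesgue number argument for the Stieltjes measure of `τ`: small sets free of
atoms above `θ'` carry mass below `θ`.
-/

open MeasureTheory Set Filter Function Topology
open scoped ENNReal

noncomputable section

def gridCount (f : ℝ → ℝ) (ε θ : ℝ) (j : ℕ) : ℕ :=
  ((Finset.range j).filter fun i : ℕ => θ < f ((i + 1) * (ε / j)) - f (i * (ε / j))).card

def jumpSet (g : ℝ → ℝ) (ε θ : ℝ) : Set ℝ :=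
  {s ∈ Ioc 0 ε | θ < g s - leftLim g s}

def gridCell (h s : ℝ) : ℕ := ⌈s / h⌉₊ - 1

theorem gridCell_eq_iff {h s : ℝ} (hh : 0 < h) (hs : 0 < s) {i : ℕ} :
    gridCell h s = i ↔ s ∈ Ioc (i * h) ((i + 1) * h) := by
  have hceil : 1 ≤ ⌈s / h⌉₊ := Nat.one_le_iff_ne_zero.2 (by positivity)
  rw [gridCell, show ⌈s / h⌉₊ - 1 = i ↔ ⌈s / h⌉₊ = i + 1 by omega,
    Nat.ceil_eq_iff i.succ_ne_zero, mem_Ioc, lt_div_iff₀ hh, div_le_iff₀ hh]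
  push_cast
  simp

theorem gridCell_lt {h s : ℝ} (hh : 0 < h) {j : ℕ} (hj : 0 < j) (hs : s ≤ j * h) :
    gridCell h s < j := by
  have : ⌈s / h⌉₊ ≤ j := Nat.ceil_le.2 ((div_le_iff₀ hh).2 hs)
  unfold gridCell; omega

theorem mem_Ioc_of_gridCell {h s : ℝ} (hh : 0 < h) (hs : 0 < s) :
    s ∈ Ioc (gridCell h s * h) ((gridCell h s + 1) * h) :=
  (gridCell_eq_iff hh hs).1 rfl

theorem cast_add_one_mul_div_le {ε : ℝ} (hε : 0 ≤ ε) {i j : ℕ} (hij : i < j) :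
    ((i : ℝ) + 1) * (ε / j) ≤ ε := by
  have hij' : (i : ℝ) + 1 ≤ j := by exact_mod_cast hij
  calc ((i : ℝ) + 1) * (ε / j) ≤ j * (ε / j) := by gcongr
    _ = ε := mul_div_cancel₀ ε (Nat.cast_ne_zero.2 (by omega))

theorem gridCount_le_gridCount {f f' : ℝ → ℝ} {ε θ θ' : ℝ} (hε : 0 ≤ ε) (j : ℕ)
    (hff' : ∀ u v, 0 ≤ u → u ≤ v → v ≤ ε → θ < f v - f u → θ' < f' v - f' u) :
    gridCount f ε θ j ≤ gridCount f' ε θ' j := by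
  refine Finset.card_le_card fun i hi => ?_
  simp only [Finset.mem_filter, Finset.mem_range] at hi ⊢
  exact ⟨hi.1, hff' _ _ (by positivity) (by gcongr; linarith)
    (cast_add_one_mul_div_le hε hi.1) hi.2⟩

theorem Monotone.eventually_ncard_jumpSet_le_gridCount {g : ℝ → ℝ} (hg : Monotone g)
    {ε θ : ℝ} (hε : 0 < ε) (hfin : (jumpSet g ε θ).Finite) :
    ∀ᶠ j in atTop, (jumpSet g ε θ).ncard ≤ gridCount g ε θ j := by
  -- once the mesh is below the least distance between two jumps, distinct jumps lie in
  -- distinct cells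
  have hsep : ∀ᶠ j : ℕ in atTop, ∀ a ∈ jumpSet g ε θ, ∀ b ∈ jumpSet g ε θ,
      a ≠ b → ε / j < |a - b| := by
    refine (hfin.eventually_all).2 fun a _ => (hfin.eventually_all).2 fun b _ => ?_
    by_cases hab : a = b
    · exact Eventually.of_forall fun _ h => absurd hab h
    · exact ((tendsto_const_div_atTop_nhds_zero_nat ε).eventually
        (eventually_lt_nhds (abs_pos.2 (sub_ne_zero.2 hab)))).mono fun _ h _ => h
  filter_upwards [hsep, eventually_gt_atTop 0] with j hsep hj
  have hh : 0 < ε / j := by positivity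
  rw [ncard_eq_toFinset_card _ hfin]
  refine Finset.card_le_card_of_injOn (gridCell (ε / j)) (fun s hs => ?_) fun a ha b hb hab => ?_
  · obtain ⟨⟨hs0, hsε⟩, hjump⟩ := hfin.mem_toFinset.1 hs
    obtain ⟨hlo, hhi⟩ := mem_Ioc_of_gridCell hh hs0
    simp only [Finset.coe_filter, Finset.mem_range, mem_ofPred_eq]
    refine ⟨gridCell_lt hh hj (by rwa [mul_div_cancel₀ ε (by positivity)]), ?_⟩
    linarith [hg.le_leftLim hlo, hg hhi]
  · by_contra hne
    have ha' := mem_Ioc_of_gridCell hh (hfin.mem_toFinset.1 ha).1.1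
    have hb' := mem_Ioc_of_gridCell hh (hfin.mem_toFinset.1 hb).1.1
    rw [hab] at ha'
    have : |a - b| < ε / j := by
      rw [abs_sub_lt_iff]; constructor <;> linarith [ha'.1, ha'.2, hb'.1, hb'.2]
    exact absurd (hsep a (hfin.mem_toFinset.1 ha) b (hfin.mem_toFinset.1 hb) hne) this.not_gt

theorem exists_pos_forall_measure_lt_of_measure_singleton_le {X : Type*} [PseudoMetricSpace X]
    [MeasurableSpace X] [MeasurableSingletonClass X] (μ : Measure X) [μ.OuterRegular]
    [SigmaFinite μ] {K : Set X} (hK : IsCompact K) {a b : ℝ≥0∞} (hab : a < b) :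
    ∃ δ > 0, ∀ x ∈ K, ∀ S ⊆ Metric.ball x δ, (∀ y ∈ S, μ {y} ≤ a) → μ S < b := by
  have hU (y : X) : ∃ U, y ∈ U ∧ IsOpen U ∧ μ U < μ {y} + (b - a) := by
    obtain ⟨U, hyU, hUo, hU⟩ := Set.exists_isOpen_lt_of_lt {y} _
      (ENNReal.lt_add_right (measure_singleton_lt_top (μ := μ)).ne (tsub_pos_of_lt hab).ne')
    exact ⟨U, singleton_subset_iff.1 hyU, hUo, hU⟩
  choose U hyU hUo hU using hU
  obtain ⟨δ, hδ, hball⟩ :=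
    lebesgue_number_lemma_of_metric hK hUo fun x _ => mem_iUnion.2 ⟨x, hyU x⟩
  refine ⟨δ, hδ, fun x hx S hSx hatoms => ?_⟩
  obtain ⟨y, hy⟩ := hball x hx
  have hSU : S ⊆ U y := hSx.trans hy
  by_cases hyS : y ∈ S
  · calc μ S ≤ μ (U y) := measure_mono hSU
      _ < μ {y} + (b - a) := hU y
      _ ≤ a + (b - a) := by gcongr; exact hatoms y hyS
      _ = b := add_tsub_cancel_of_le hab.le
  · have hSy : μ S + μ {y} < (b - a) + μ {y} := calc
      μ S + μ {y} = μ (S ∪ {y}) :=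
        (measure_union (disjoint_singleton_right.2 hyS) (measurableSet_singleton y)).symm
      _ ≤ μ (U y) := measure_mono (union_subset hSU (singleton_subset_iff.2 (hyU y)))
      _ < (b - a) + μ {y} := add_comm (μ {y}) _ ▸ hU y
    exact ((ENNReal.add_lt_add_iff_right (measure_singleton_lt_top (μ := μ)).ne).1 hSy).trans_le
      tsub_le_self

namespace StieltjesFunction

variable (g : StieltjesFunction ℝ)

theorem finite_jumpSet {θ : ℝ} (hθ : 0 < θ) (ε : ℝ) : (jumpSet g ε θ).Finite := by
  have hfin := Measure.finite_const_le_meas_of_disjoint_iUnion g.measure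
    (ENNReal.ofReal_pos.2 hθ) (As := fun s : Ioc (0 : ℝ) ε => ({s.1} : Set ℝ))
    (fun _ => measurableSet_singleton _)
    (fun s t hst => disjoint_singleton.2 (Subtype.coe_injective.ne hst))
    (by
      rw [show (⋃ s : Ioc (0 : ℝ) ε, ({s.1} : Set ℝ)) = Ioc 0 ε by ext; simp, g.measure_Ioc]
      exact ENNReal.ofReal_ne_top)
  refine (hfin.image Subtype.val).subset fun s ⟨hs, hjump⟩ => ⟨⟨s, hs⟩, ?_, rfl⟩
  simp only [mem_ofPred_eq, g.measure_singleton]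
  exact ENNReal.ofReal_le_ofReal hjump.le

theorem eventually_gridCount_le_ncard_jumpSet {ε θ θ' : ℝ} (hε : 0 < ε) (hθ' : 0 < θ')
    (hθ'θ : θ' < θ) : ∀ᶠ j in atTop, gridCount g ε θ j ≤ (jumpSet g ε θ').ncard := by
  obtain ⟨δ, hδ, hsmall⟩ := exists_pos_forall_measure_lt_of_measure_singleton_le g.measure
    isCompact_Icc ((ENNReal.ofReal_lt_ofReal_iff (hθ'.trans hθ'θ)).2 hθ'θ) (K := Icc 0 ε)
  filter_upwards [(tendsto_const_div_atTop_nhds_zero_nat ε).eventually (eventually_lt_nhds hδ),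
    eventually_gt_atTop 0] with j hmesh hj
  have hh : 0 < ε / j := by positivity
  have hfin := g.finite_jumpSet hθ' ε
  have hcell : ∀ i < j, θ < g ((i + 1) * (ε / j)) - g (i * (ε / j)) →
      ∃ s ∈ jumpSet g ε θ', gridCell (ε / j) s = i := by
    intro i hij hinc
    by_contra! hnone
    have hiε := cast_add_one_mul_div_le hε.le hij
    have hball : Ioc (i * (ε / j)) ((i + 1) * (ε / j)) ⊆ Metric.ball (i * (ε / j)) δ :=
      fun y hy => by
        rw [Metric.mem_ball, Real.dist_eq, abs_lt]; constructor <;> nlinarith [hy.1, hy.2]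
    have hatoms : ∀ y ∈ Ioc (i * (ε / j)) ((i + 1) * (ε / j)),
        g.measure {y} ≤ ENNReal.ofReal θ' := by
      intro y hy
      have hy0 : 0 < y := lt_of_le_of_lt (by positivity) hy.1
      rw [g.measure_singleton]
      refine ENNReal.ofReal_le_ofReal (not_lt.1 fun hjump => ?_)
      exact hnone y ⟨⟨hy0, hy.2.trans hiε⟩, hjump⟩ ((gridCell_eq_iff hh hy0).2 hy)
    have hlt := hsmall _ ⟨by positivity, by nlinarith⟩ _ hball hatoms
    rw [g.measure_Ioc, ENNReal.ofReal_lt_ofReal_iff (hθ'.trans hθ'θ)] at hlt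
    exact hlt.not_gt hinc
  calc gridCount g ε θ j ≤ (hfin.toFinset.image (gridCell (ε / j))).card := by
        refine Finset.card_le_card fun i hi => ?_
        simp only [Finset.mem_filter, Finset.mem_range] at hi
        obtain ⟨s, hs, rfl⟩ := hcell i hi.1 hi.2
        exact Finset.mem_image_of_mem _ (hfin.mem_toFinset.2 hs)
    _ ≤ (jumpSet g ε θ').ncard := by
        rw [ncard_eq_toFinset_card _ hfin]; exact Finset.card_image_le

variable {f : ℝ → ℝ}

def ofMonotoneOnIci (hf : MonotoneOn f (Ici 0))
    (hrc : ∀ s ≥ 0, ContinuousWithinAt f (Ici s) s) : StieltjesFunction ℝ where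
  toFun u := f (max u 0)
  mono' u v huv := hf (le_max_right u 0) (le_max_right v 0) (max_le_max_right 0 huv)
  right_continuous' x := by
    have : ContinuousWithinAt (fun u : ℝ => max u 0) (Ici x) x :=
      (continuous_id.max continuous_const).continuousWithinAt
    exact (hrc _ (le_max_right x 0)).comp (f := fun u : ℝ => max u 0) this
      fun u hu => max_le_max_right 0 (mem_Ici.1 hu)

variable (hf : MonotoneOn f (Ici 0)) (hrc : ∀ s ≥ 0, ContinuousWithinAt f (Ici s) s)

theorem ofMonotoneOnIci_apply {s : ℝ} (hs : 0 ≤ s) : ofMonotoneOnIci hf hrc s = f s := by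
  simp [ofMonotoneOnIci, max_eq_left hs]

theorem leftLim_ofMonotoneOnIci {s : ℝ} (hs : 0 < s) :
    leftLim (ofMonotoneOnIci hf hrc) s = leftLim f s := by
  refine (leftLim_eq_of_tendsto
    (((ofMonotoneOnIci hf hrc).mono.tendsto_leftLim s).congr' ?_)).symm
  filter_upwards [Ioo_mem_nhdsLT hs] with u hu using ofMonotoneOnIci_apply hf hrc hu.1.le

theorem jumpSet_ofMonotoneOnIci {ε θ b : ℝ} (hb : 0 < b) :
    jumpSet (ofMonotoneOnIci hf hrc) ε (θ / b) =
      {s ∈ Ioc 0 ε | b * (f s - leftLim f s) > θ} := by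
  ext s
  simp only [jumpSet, mem_ofPred_eq, and_congr_right_iff]
  intro hs
  rw [ofMonotoneOnIci_apply hf hrc hs.1.le, leftLim_ofMonotoneOnIci hf hrc hs.1, div_lt_iff₀' hb]

end StieltjesFunction

theorem tendsto_natCast_rpow_mul_ofReal {p x : ℝ} {k : ℕ → ℕ}
    (h : Tendsto (fun n : ℕ => (n : ℝ) ^ p * k n) atTop (𝓝 x)) :
    Tendsto (fun n : ℕ => (n : ℝ≥0∞) ^ p * k n) atTop (𝓝 (ENNReal.ofReal x)) := by
  refine (ENNReal.tendsto_ofReal h).congr' ?_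
  filter_upwards [eventually_gt_atTop 0] with n hn
  rw [ENNReal.ofReal_mul (by positivity), ← ENNReal.ofReal_rpow_of_pos (by positivity),
    ENNReal.ofReal_natCast, ENNReal.ofReal_natCast]

theorem exists_pos_forall_integral_bounds {f : ℝ → ℝ} {a b : ℝ}
    (hf : ContinuousWithinAt f (Ici 0) 0) (hfi : LocallyIntegrableOn f (Ici 0))
    (ha : a < f 0) (hb : f 0 < b) :
    ∃ η > 0, ∀ x y, 0 ≤ x → x ≤ y → y ≤ η →
      a * (y - x) ≤ ∫ u in x..y, f u ∧ ∫ u in x..y, f u ≤ b * (y - x) := by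
  obtain ⟨η, hη, hsub⟩ := mem_nhdsGE_iff_exists_Icc_subset.1 (hf (Ioo_mem_nhds ha hb))
  refine ⟨η, hη, fun x y hx hxy hy => ?_⟩
  have hint : IntervalIntegrable f volume x y :=
    (intervalIntegrable_iff_integrableOn_Icc_of_le hxy).2
      (hfi.integrableOn_compact_subset (Icc_subset_Ici_iff hxy |>.2 hx) isCompact_Icc)
  have hmem : ∀ u ∈ Icc x y, f u ∈ Ioo a b := fun u hu => hsub ⟨hx.trans hu.1, hu.2.trans hy⟩
  constructor
  · simpa [mul_comm] using intervalIntegral.integral_mono_on hxy intervalIntegrable_const hint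
      fun u hu => (hmem u hu).1.le
  · simpa [mul_comm] using intervalIntegral.integral_mono_on hxy hint intervalIntegrable_const
      fun u hu => (hmem u hu).2.le

theorem exists_pos_forall_integral_comp_bounds {f h : ℝ → ℝ} {a b : ℝ}
    (hf : ContinuousWithinAt f (Ici 0) 0) (hfi : LocallyIntegrableOn f (Ici 0))
    (hh : MonotoneOn h (Ici 0)) (hh0 : h 0 = 0) (hhc : ContinuousWithinAt h (Ici 0) 0)
    (ha : a < f 0) (hb : f 0 < b) :
    ∃ s₀ > 0, ∀ q r, 0 ≤ q → q ≤ r → r ≤ s₀ →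
      a * (h r - h q) ≤ (∫ u in 0..h r, f u) - ∫ u in 0..h q, f u ∧
      (∫ u in 0..h r, f u) - ∫ u in 0..h q, f u ≤ b * (h r - h q) := by
  obtain ⟨η, hη, hbound⟩ := exists_pos_forall_integral_bounds hf hfi ha hb
  obtain ⟨s₀, hs₀, hsub⟩ :=
    mem_nhdsGE_iff_exists_Icc_subset.1 (hhc (Iic_mem_nhds (by rwa [hh0] : h 0 < η)))
  have hint : ∀ c ≥ 0, IntervalIntegrable f volume 0 c := fun c hc =>
    (intervalIntegrable_iff_integrableOn_Icc_of_le hc).2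
      (hfi.integrableOn_compact_subset Icc_subset_Ici_self isCompact_Icc)
  refine ⟨s₀, hs₀, fun q r hq hqr hr => ?_⟩
  have hq0 : 0 ≤ h q := hh0 ▸ hh (mem_Ici.2 le_rfl) hq hq
  have hqr' : h q ≤ h r := hh hq (hq.trans hqr) hqr
  rw [intervalIntegral.integral_interval_sub_left (hint _ (hq0.trans hqr')) (hint _ hq0)]
  exact hbound _ _ hq0 hqr' (hsub ⟨hq.trans hqr, hr⟩)

/-- The paper's `n ^ (1 - α m) · #{s ≤ 1 / n | Δf s > n ^ (-m)}` as `n → ∞`, with the jumps counted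
through increments over ever finer grids; values in `ℝ≥0∞` make `liminf` and `limsup` total. -/
def rescaledJumpCount (α m : ℝ) (f : ℝ → ℝ) : ℝ≥0∞ :=
  limsup (fun n : ℕ => (n : ℝ≥0∞) ^ (1 - α * m) *
    liminf (fun j => (gridCount f (1 / n) ((1 / n) ^ m) j : ℝ≥0∞)) atTop) atTop

section Measurability

variable {Ω : Type*} {mΩ : MeasurableSpace Ω} {W : ℝ → Ω → ℝ}

theorem measurable_gridCount {ε : ℝ} (hε : 0 ≤ ε) (θ : ℝ) (j : ℕ)
    (hW : ∀ s ∈ Icc 0 ε, Measurable (W s)) :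
    Measurable fun ω => gridCount (fun s => W s ω) ε θ j := by
  simp only [gridCount, Finset.card_filter]
  refine Finset.measurable_sum _ fun i hi => Measurable.ite ?_ measurable_const measurable_const
  have hiε := cast_add_one_mul_div_le hε (Finset.mem_range.1 hi)
  have hpt : ∀ x : ℝ, 0 ≤ x → x ≤ (i : ℝ) + 1 → Measurable (W (x * (ε / j))) := fun x hx hxi =>
    hW _ ⟨by positivity, le_trans (by gcongr) hiε⟩
  exact measurableSet_lt measurable_const
    ((hpt _ (by positivity) le_rfl).sub (hpt _ (by positivity) (by linarith)))

theorem measurable_rescaledJumpCount (α m : ℝ) {t : ℝ} (ht : 0 < t)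
    (hW : ∀ s ∈ Icc 0 t, Measurable (W s)) :
    Measurable fun ω => rescaledJumpCount α m fun s => W s ω := by
  -- only the scales `1 / n ≤ t` matter for the `limsup`
  obtain ⟨K, hK⟩ := exists_nat_one_div_lt ht
  have hshift (ω : Ω) := (limsup_nat_add (fun n : ℕ => (n : ℝ≥0∞) ^ (1 - α * m) *
    liminf (fun j => (gridCount (fun s => W s ω) (1 / n) ((1 / n) ^ m) j : ℝ≥0∞)) atTop)
    (K + 1)).symm
  simp only [rescaledJumpCount, hshift]
  refine Measurable.limsup fun n => measurable_const.mul (Measurable.liminf fun j =>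
    measurable_from_nat.comp (measurable_gridCount (by positivity) _ j fun s hs =>
      hW s ⟨hs.1, hs.2.trans ?_⟩))
  calc (1 : ℝ) / ↑(n + (K + 1)) ≤ 1 / ((K : ℝ) + 1) := by gcongr; push_cast; linarith
    _ ≤ t := hK.le

end Measurability

section Identification

variable {α m : ℝ} {g : StieltjesFunction ℝ} {W : ℝ → ℝ}

theorem rescaledJumpCount_le {b b' : ℝ} (hb' : 0 < b') (hb'b : b' < b)
    (hW : ∃ s₀ > 0, ∀ q r, 0 ≤ q → q ≤ r → r ≤ s₀ → W r - W q ≤ b' * (g r - g q))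
    (hcount : Tendsto (fun n : ℕ => (n : ℝ≥0∞) ^ (1 - α * m) *
      (jumpSet g (1 / n) ((1 / n) ^ m / b)).ncard) atTop (𝓝 (ENNReal.ofReal (b ^ α)))) :
    rescaledJumpCount α m W ≤ ENNReal.ofReal (b ^ α) := by
  obtain ⟨s₀, hs₀, hW⟩ := hW
  rw [← hcount.limsup_eq]
  refine limsup_le_limsup ?_
  filter_upwards [eventually_gt_atTop 0,
    tendsto_one_div_atTop_nhds_zero_nat.eventually (eventually_le_nhds hs₀)] with n hn hns₀
  have hε : (0 : ℝ) < 1 / n := by positivity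
  have hθ : (0 : ℝ) < (1 / n) ^ m := by positivity
  gcongr
  refine liminf_le_of_frequently_le' (Eventually.frequently ?_)
  filter_upwards [g.eventually_gridCount_le_ncard_jumpSet hε (div_pos hθ (hb'.trans hb'b))
    (div_lt_div_of_pos_left hθ hb' hb'b)] with j hj
  refine Nat.cast_le.2 ((gridCount_le_gridCount hε.le j fun u v hu huv hv hinc => ?_).trans hj)
  rw [div_lt_iff₀' hb']
  exact hinc.trans_le (hW u v hu huv (hv.trans hns₀))

theorem le_rescaledJumpCount {a : ℝ} (ha : 0 < a)
    (hW : ∃ s₀ > 0, ∀ q r, 0 ≤ q → q ≤ r → r ≤ s₀ → a * (g r - g q) ≤ W r - W q)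
    (hcount : Tendsto (fun n : ℕ => (n : ℝ≥0∞) ^ (1 - α * m) *
      (jumpSet g (1 / n) ((1 / n) ^ m / a)).ncard) atTop (𝓝 (ENNReal.ofReal (a ^ α)))) :
    ENNReal.ofReal (a ^ α) ≤ rescaledJumpCount α m W := by
  obtain ⟨s₀, hs₀, hW⟩ := hW
  rw [← hcount.limsup_eq]
  refine limsup_le_limsup ?_
  filter_upwards [eventually_gt_atTop 0,
    tendsto_one_div_atTop_nhds_zero_nat.eventually (eventually_le_nhds hs₀)] with n hn hns₀
  have hε : (0 : ℝ) < 1 / n := by positivity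
  have hθ : (0 : ℝ) < (1 / n) ^ m := by positivity
  gcongr
  refine le_liminf_of_le (by isBoundedDefault) ?_
  filter_upwards [g.mono.eventually_ncard_jumpSet_le_gridCount hε
    (g.finite_jumpSet (div_pos hθ ha) _)] with j hj
  refine Nat.cast_le.2 (hj.trans (gridCount_le_gridCount hε.le j fun u v hu huv hv hinc => ?_))
  rw [div_lt_iff₀' ha] at hinc
  exact hinc.trans_le (hW u v hu huv (hv.trans hns₀))

theorem rescaledJumpCount_eq (hα : 0 < α) {x₀ : ℝ}
    (hW : ∀ a b, a < x₀ → x₀ < b → ∃ s₀ > 0, ∀ q r, 0 ≤ q → q ≤ r → r ≤ s₀ →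
      a * (g r - g q) ≤ W r - W q ∧ W r - W q ≤ b * (g r - g q))
    (hcount : ∀ b > 0, Tendsto (fun n : ℕ => (n : ℝ≥0∞) ^ (1 - α * m) *
      (jumpSet g (1 / n) ((1 / n) ^ m / b)).ncard) atTop (𝓝 (ENNReal.ofReal (b ^ α)))) :
    rescaledJumpCount α m W = ENNReal.ofReal (max x₀ 0 ^ α) := by
  have hF : Continuous fun b : ℝ => ENNReal.ofReal (b ^ α) :=
    ENNReal.continuous_ofReal.comp (Real.continuous_rpow_const hα.le)
  have hupper : ∀ b > max x₀ 0, rescaledJumpCount α m W ≤ ENNReal.ofReal (b ^ α) := by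
    intro b hb
    have hx₀ := le_max_left x₀ 0
    have h0 := le_max_right x₀ 0
    refine rescaledJumpCount_le (b' := (max x₀ 0 + b) / 2) (by linarith) (by linarith) ?_
      (hcount b (by linarith))
    obtain ⟨s₀, hs₀, hW⟩ := hW (x₀ - 1) ((max x₀ 0 + b) / 2) (by linarith) (by linarith)
    exact ⟨s₀, hs₀, fun q r hq hqr hr => (hW q r hq hqr hr).2⟩
  refine le_antisymm (ge_of_tendsto (hF.tendsto _ |>.mono_left nhdsWithin_le_nhds)
    (eventually_nhdsWithin_of_forall (s := Ioi (max x₀ 0)) hupper)) ?_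
  rcases le_or_gt x₀ 0 with hx₀ | hx₀
  · simp [max_eq_right hx₀, Real.zero_rpow hα.ne']
  have hlower : ∀ a ∈ Ioo 0 x₀, ENNReal.ofReal (a ^ α) ≤ rescaledJumpCount α m W := by
    intro a ⟨ha, hax⟩
    refine le_rescaledJumpCount ha ?_ (hcount a ha)
    obtain ⟨s₀, hs₀, hW⟩ := hW a (x₀ + 1) hax (by linarith)
    exact ⟨s₀, hs₀, fun q r hq hqr hr => (hW q r hq hqr hr).1⟩
  rw [max_eq_left hx₀.le]
  exact le_of_tendsto (hF.tendsto _ |>.mono_left nhdsWithin_le_nhds)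
    (eventually_of_mem (Ioo_mem_nhdsLT hx₀) hlower)

end Identification

theorem rescaledJumpCount_integral_comp_eq {α m : ℝ} (hα : 0 < α) {f h : ℝ → ℝ}
    (hf : ContinuousWithinAt f (Ici 0) 0) (hfi : LocallyIntegrableOn f (Ici 0))
    (hh : MonotoneOn h (Ici 0)) (hhc : ∀ s ≥ 0, ContinuousWithinAt h (Ici s) s) (hh0 : h 0 = 0)
    (hcount : ∀ b > 0, Tendsto (fun n : ℕ => (n : ℝ) ^ (1 - α * m) *
      ({s ∈ Ioc 0 (1 / (n : ℝ)) | b * (h s - leftLim h s) > (1 / n) ^ m}.ncard : ℝ))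
      atTop (𝓝 (b ^ α))) :
    rescaledJumpCount α m (fun ℓ => ∫ u in 0..h ℓ, f u) = ENNReal.ofReal (max (f 0) 0 ^ α) := by
  refine rescaledJumpCount_eq hα (g := StieltjesFunction.ofMonotoneOnIci hh hhc)
    (fun a b ha hb => ?_) fun b hb => ?_
  · obtain ⟨s₀, hs₀, hbounds⟩ :=
      exists_pos_forall_integral_comp_bounds hf hfi hh hh0 (hhc 0 le_rfl) ha hb
    refine ⟨s₀, hs₀, fun q r hq hqr hr => ?_⟩
    rw [StieltjesFunction.ofMonotoneOnIci_apply hh hhc hq,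
      StieltjesFunction.ofMonotoneOnIci_apply hh hhc (hq.trans hqr)]
    exact hbounds q r hq hqr hr
  · refine tendsto_natCast_rpow_mul_ofReal ((hcount b hb).congr fun n => ?_)
    rw [StieltjesFunction.jumpSet_ofMonotoneOnIci hh hhc hb]

theorem toReal_ofReal_rpow_rpow_inv {α x : ℝ} (hα : α ≠ 0) (hx : 0 ≤ x) :
    (ENNReal.ofReal (x ^ α)).toReal ^ α⁻¹ = x := by
  rw [ENNReal.toReal_ofReal (by positivity), ← Real.rpow_mul hx, mul_inv_cancel₀ hα,
    Real.rpow_one]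

end

theorem stmt11_general (α m : ℝ) (hα : α ∈ Set.Ioo (0 : ℝ) 1)
    {Ω : Type*} [MeasurableSpace Ω] (P : Measure Ω)
    (X τ : ℝ → Ω → ℝ)
    (hX_rc : ∀ ω : Ω, ∀ s ≥ (0 : ℝ), ContinuousWithinAt (fun u => X u ω) (Set.Ici s) s)
    (hX_int : ∀ ω : Ω, LocallyIntegrableOn (fun u => X u ω) (Set.Ici 0))
    (hτ_mono : ∀ ω : Ω, MonotoneOn (fun s => τ s ω) (Set.Ici 0))
    (hτ_rc : ∀ ω : Ω, ∀ s ≥ (0 : ℝ), ContinuousWithinAt (fun u => τ u ω) (Set.Ici s) s)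
    (hτ0 : ∀ ω : Ω, τ 0 ω = 0)
    (Y : ℝ → Ω → ℝ) (hY : ∀ ℓ : ℝ, ∀ ω : Ω, Y ℓ ω = ∫ u in (0 : ℝ)..(τ ℓ ω), X u ω)
    (N : ℝ → ℝ → Ω → ℕ)
    (hN : ∀ ε > (0 : ℝ), ∀ b : ℝ, ∀ ω : Ω,
      N ε b ω = {s ∈ Set.Ioc (0 : ℝ) ε |
        b * (τ s ω - leftLim (fun u => τ u ω) s) > ε ^ m}.ncard)
    (hLLN : ∀ᵐ ω ∂P, ∀ b > (0 : ℝ),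
      Tendsto (fun n : ℕ => (n : ℝ) ^ (1 - α * m) * (N (1 / n) b ω : ℝ))
        atTop (nhds (b ^ α))) :
    ∃ Z : Ω → ℝ,
      Measurable[⨅ t ∈ Set.Ioi (0 : ℝ), ⨆ s ∈ Set.Icc (0 : ℝ) t,
        MeasurableSpace.comap (Y s) inferInstance] Z ∧
      ∀ᵐ ω ∂P, Z ω = X 0 ω := by
  refine ⟨fun ω => (rescaledJumpCount α m fun s => Y s ω).toReal ^ α⁻¹ -
    (rescaledJumpCount α m fun s => -Y s ω).toReal ^ α⁻¹, ?_, ?_⟩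
  · refine measurable_iff_comap_le.2 (le_iInf₂ fun t ht => measurable_iff_comap_le.1 ?_)
    have hYt : ∀ s ∈ Icc 0 t,
        Measurable[⨆ s ∈ Icc 0 t, MeasurableSpace.comap (Y s) inferInstance] (Y s) :=
      fun s hs => Measurable.of_comap_le (le_iSup₂ (f := fun s (_ : s ∈ Icc 0 t) =>
        MeasurableSpace.comap (Y s) inferInstance) s hs)
    exact ((measurable_rescaledJumpCount α m ht hYt).ennreal_toReal.pow_const _).sub
      ((measurable_rescaledJumpCount α m ht fun s hs => (hYt s hs).neg).ennreal_toReal.pow_const _)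
  filter_upwards [hLLN] with ω hω
  have hcount : ∀ b > 0, Tendsto (fun n : ℕ => (n : ℝ) ^ (1 - α * m) *
      ({s ∈ Ioc 0 (1 / (n : ℝ)) | b * (τ s ω - leftLim (fun u => τ u ω) s) > (1 / n) ^ m}.ncard
        : ℝ)) atTop (𝓝 (b ^ α)) := fun b hb =>
    (hω b hb).congr' ((eventually_gt_atTop 0).mono fun n hn => by rw [hN _ (by positivity)])
  have hpos := rescaledJumpCount_integral_comp_eq hα.1 (hX_rc ω 0 le_rfl) (hX_int ω)
    (hτ_mono ω) (hτ_rc ω) (hτ0 ω) hcount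
  have hneg := rescaledJumpCount_integral_comp_eq hα.1 (f := fun u => -X u ω)
    (hX_rc ω 0 le_rfl).neg (hX_int ω).neg (hτ_mono ω) (hτ_rc ω) (hτ0 ω) hcount
  simp only [intervalIntegral.integral_neg, ← hY] at hpos hneg
  rw [hpos, hneg, toReal_ofReal_rpow_rpow_inv hα.1.ne' (le_max_right _ _),
    toReal_ofReal_rpow_rpow_inv hα.1.ne' (le_max_right _ _)]
  exact max_zero_sub_max_neg_zero_eq_self (X 0 ω)

/-- Key measurability step of Theorem 1: the initial value `X 0` can be recovered from
the germ σ-field `⋂_{t>0} σ(Ŷ_s : 0 ≤ s ≤ t)` of the time-changed integral process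
`Ŷ_ℓ = ∫_0^{τ_ℓ} X_u du`, provided the jump counts of `τ` satisfy almost surely the
law of large numbers `n^(1-αm) N_{1/n,b} → b^α` for all `b > 0`. -/
theorem stmt11 (α m : ℝ) (hα : α ∈ Set.Ioo (0 : ℝ) 1) (hm : m > 2 / α)
    {Ω : Type*} [MeasurableSpace Ω] (P : Measure Ω) [IsProbabilityMeasure P]
    (X τ : ℝ → Ω → ℝ)
    (hX_meas : ∀ s : ℝ, Measurable (X s)) (hτ_meas : ∀ s : ℝ, Measurable (τ s))
    (hX_rc : ∀ ω : Ω, ∀ s ≥ (0 : ℝ), ContinuousWithinAt (fun u => X u ω) (Set.Ici s) s)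
    (hX_int : ∀ ω : Ω, LocallyIntegrableOn (fun u => X u ω) (Set.Ici 0))
    (hτ_mono : ∀ ω : Ω, MonotoneOn (fun s => τ s ω) (Set.Ici 0))
    (hτ_rc : ∀ ω : Ω, ∀ s ≥ (0 : ℝ), ContinuousWithinAt (fun u => τ u ω) (Set.Ici s) s)
    (hτ0 : ∀ ω : Ω, τ 0 ω = 0) (hτ_nonneg : ∀ ω : Ω, ∀ s ≥ (0 : ℝ), 0 ≤ τ s ω)
    (Y : ℝ → Ω → ℝ) (hY : ∀ ℓ : ℝ, ∀ ω : Ω, Y ℓ ω = ∫ u in (0 : ℝ)..(τ ℓ ω), X u ω)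
    (N : ℝ → ℝ → Ω → ℕ)
    (hN : ∀ ε > (0 : ℝ), ∀ b : ℝ, ∀ ω : Ω,
      N ε b ω = {s ∈ Set.Ioc (0 : ℝ) ε |
        b * (τ s ω - leftLim (fun u => τ u ω) s) > ε ^ m}.ncard)
    (hLLN : ∀ᵐ ω ∂P, ∀ b > (0 : ℝ),
      Tendsto (fun n : ℕ => (n : ℝ) ^ (1 - α * m) * (N (1 / n) b ω : ℝ))
        atTop (nhds (b ^ α))) :
    ∃ Z : Ω → ℝ,
      Measurable[⨅ t ∈ Set.Ioi (0 : ℝ), ⨆ s ∈ Set.Icc (0 : ℝ) t,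
        MeasurableSpace.comap (Y s) inferInstance] Z ∧
      ∀ᵐ ω ∂P, Z ω = X 0 ω :=
  stmt11_general α m hα P X τ hX_rc hX_int hτ_mono hτ_rc hτ0 Y hY N hN hLLN
end
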